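/- For any integer n ≠ 0 and any constant map c : S¹ → S¹, the homotopic distance D(f_n, c) = 1, where f_n(z) = zⁿ. -/

import Mathlib

open ContinuousMap Set ENNReal

/-- Homotopic distance between continuous maps `f g : C(X, Y)`: the least `k`
such that some open cover `U_0, ..., U_k` of `X` satisfies
`f|_{U i} ≃ g|_{U i}` for all `i`; `⊤` if no such cover exists. -/
noncomputable def hD {X Y : Type*} [TopologicalSpace X] [TopologicalSpace Y]
    (f g : C(X, Y)) : ℕ∞ :=
  sInf {n : ℕ∞ | ∃ k : ℕ, n = k ∧ ∃ U : Fin (k + 1) → Set X,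
    (∀ i, IsOpen (U i)) ∧ (⋃ i, U i) = univ ∧
    ∀ i, (f.restrict (U i)).Homotopic (g.restrict (U i))}

/-- The open ball of radius `r` around `f` for the homotopic distance. -/
noncomputable def hBall {X Y : Type*} [TopologicalSpace X] [TopologicalSpace Y]
    (f : C(X, Y)) (r : ℝ) : Set C(X, Y) :=
  {g | (hD f g : ℝ≥0∞) < ENNReal.ofReal r}

/-- The topology on `Map(X,Y)` induced by the homotopic distance pseudometric,
generated by the open balls. -/
noncomputable def hTop (X Y : Type*) [TopologicalSpace X] [TopologicalSpace Y] :
    TopologicalSpace C(X, Y) :=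
  TopologicalSpace.generateFrom {s | ∃ (f : C(X, Y)) (r : ℝ), 0 < r ∧ s = hBall f r}


/-- The degree-`n` power map on the circle. -/
noncomputable def fpow (n : ℤ) : C(Circle, Circle) :=
  ⟨fun z => z ^ n, by continuity⟩

/-! If `zⁿ` were homotopic to a constant, homotopy lifting through the covering
`Circle.exp : ℝ → S¹` would give it a continuous logarithm `g`; the two lifts `t ↦ g (exp t)` and
`t ↦ n t + g 1` of `t ↦ exp (t)ⁿ` agree at `0`, hence everywhere, and evaluating at `2π` gives
`n = 0`. So the distance is positive. Conversely, on the complement of a point the identity has a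
continuous logarithm (a rotated `arg`), so there `zⁿ` factors through the contractible line and is
homotopic to every constant; the complements of two distinct points cover the circle. -/

open ContinuousMap Complex

section HomotopicDistance

variable {X Y : Type*} [TopologicalSpace X] [TopologicalSpace Y] {f g : C(X, Y)}

theorem hD_le_of_cover {k : ℕ} (U : Fin (k + 1) → Set X) (hU : ∀ i, IsOpen (U i))
    (hcover : ⋃ i, U i = univ) (h : ∀ i, (f.restrict (U i)).Homotopic (g.restrict (U i))) :
    hD f g ≤ k :=
  sInf_le ⟨k, rfl, U, hU, hcover, h⟩

theorem hD_eq_zero_iff : hD f g = 0 ↔ f.Homotopic g := by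
  refine ⟨fun h => ?_, fun h => ?_⟩
  · obtain ⟨_, ⟨k, rfl, U, -, hcover, hU⟩, hk⟩ := sInf_eq_bot.1 h 1 zero_lt_one
    obtain rfl : k = 0 := by exact_mod_cast Order.lt_one_iff.1 hk
    have hU0 : U 0 = univ := eq_univ_of_forall fun x => by
      obtain ⟨i, hi⟩ := mem_iUnion.1 (hcover ▸ mem_univ x)
      rwa [Fin.eq_zero i] at hi
    let e : C(X, U 0) := ⟨fun x => ⟨x, hU0 ▸ mem_univ x⟩, by fun_prop⟩
    exact (hU 0).comp (.refl e)
  · exact nonpos_iff_eq_zero.1 (hD_le_of_cover (fun _ => univ) (fun _ => isOpen_univ)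
      (iUnion_const _) fun _ => h.comp (.refl ⟨Subtype.val, continuous_subtype_val⟩))

theorem hD_le_one_of_homotopic_restrict_compl [T1Space X] {a b : X} (hab : a ≠ b)
    (ha : (f.restrict {a}ᶜ).Homotopic (g.restrict {a}ᶜ))
    (hb : (f.restrict {b}ᶜ).Homotopic (g.restrict {b}ᶜ)) : hD f g ≤ 1 := by
  refine hD_le_of_cover ![{a}ᶜ, {b}ᶜ] (fun i => ?_) ?_ (fun i => ?_)
  · fin_cases i <;> exact isOpen_compl_singleton
  · refine eq_univ_of_forall fun x => mem_iUnion.2 ?_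
    rcases eq_or_ne x a with rfl | hx
    exacts [⟨1, hab⟩, ⟨0, hx⟩]
  · fin_cases i
    exacts [ha, hb]

end HomotopicDistance

theorem IsCoveringMap.exists_lift_of_homotopic {E X A : Type*} [TopologicalSpace E]
    [TopologicalSpace X] [TopologicalSpace A] {p : E → X} (cov : IsCoveringMap p)
    {f₀ f₁ : C(A, X)} (h : f₀.Homotopic f₁) (g₀ : C(A, E)) (hg₀ : p ∘ g₀ = f₀) :
    ∃ g₁ : C(A, E), p ∘ g₁ = f₁ := by
  obtain ⟨F⟩ := h
  have F_0 : ∀ a, F (0, a) = p (g₀ a) := fun a => by simp [← hg₀]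
  refine ⟨(cov.liftHomotopy F.toContinuousMap g₀ F_0).curry 1, funext fun a => ?_⟩
  exact (congr_fun (cov.liftHomotopy_lifts _ g₀ F_0) (1, a)).trans (F.apply_one a)

namespace Circle

theorem homotopic_exp_comp_const {A : Type*} [TopologicalSpace A] (g : C(A, ℝ)) (y : Circle) :
    (exp.comp g).Homotopic (const A y) := by
  have hy : const A y = exp.comp (const A (arg y)) := by ext; simp
  rw [hy]
  exact (Homotopic.refl exp).comp ⟨Homotopy.affine g _⟩

theorem eq_zero_of_exp_comp_eq_zpow {n : ℤ} {g : Circle → ℝ} (hg : Continuous g)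
    (h : ∀ z, exp (g z) = z ^ n) : n = 0 := by
  have hlift : (fun t => g (exp t)) = fun t => n * t + g 1 :=
    isCoveringMap_exp.eq_of_comp_eq (hg.comp exp.continuous) (by fun_prop)
      (funext fun t => by simp [h, exp_add]) 0 (by simp)
  simpa using congr_fun hlift (2 * Real.pi)

theorem continuousAt_arg_coe {z : Circle} (hz : z ≠ exp Real.pi) :
    ContinuousAt (fun w : Circle => arg (w : ℂ)) z := by
  have harg : arg (z : ℂ) ≠ Real.pi := fun h => hz (by rw [← exp_arg z, h])
  exact (continuousAt_arg (mem_slitPlane_iff_arg.2 ⟨harg, coe_ne_zero z⟩)).comp (by fun_prop)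

theorem exists_lift_compl_singleton (p : Circle) :
    ∃ g : C(({p}ᶜ : Set Circle), ℝ), ∀ z, exp (g z) = z := by
  -- `z ↦ z * q` moves `p` to `exp π = -1`, the one point where `arg` jumps.
  set q := exp Real.pi / p
  have hq : ∀ z : ({p}ᶜ : Set Circle), (z : Circle) * q ≠ exp Real.pi := fun z h => z.2 (by
    rwa [mul_div_left_comm, mul_eq_left, div_eq_one] at h)
  refine ⟨⟨fun z => arg ((z : Circle) * q : Circle) - arg q, ?_⟩, fun z => ?_⟩
  · refine .sub (continuous_iff_continuousAt.2 fun z => ?_) continuous_const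
    exact (continuousAt_arg_coe (hq z)).comp (f := fun z : ({p}ᶜ : Set Circle) => (z : Circle) * q)
      (by fun_prop)
  · simp only [ContinuousMap.coe_mk]
    rw [exp_sub, exp_arg, exp_arg, mul_div_cancel_right]

end Circle

theorem fpow_not_homotopic_const {n : ℤ} (hn : n ≠ 0) (y : Circle) :
    ¬ (fpow n).Homotopic (const Circle y) := fun h => by
  obtain ⟨g, hg⟩ := Circle.isCoveringMap_exp.exists_lift_of_homotopic h.symm
    (const Circle (arg y)) (funext fun _ => Circle.exp_arg y)
  exact hn (Circle.eq_zero_of_exp_comp_eq_zpow g.continuous (congr_fun hg))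

theorem fpow_restrict_compl_homotopic_const (n : ℤ) (y p : Circle) :
    ((fpow n).restrict {p}ᶜ).Homotopic ((const Circle y).restrict {p}ᶜ) := by
  obtain ⟨g, hg⟩ := Circle.exists_lift_compl_singleton p
  have : (fpow n).restrict {p}ᶜ = Circle.exp.comp (n • g) := by
    ext z
    simp [hg, fpow]
  rw [this]
  exact Circle.homotopic_exp_comp_const _ y

theorem stmt8 (n : ℤ) (hn : n ≠ 0) (y : Circle) :
    hD (fpow n) (ContinuousMap.const Circle y) = 1 := by
  refine le_antisymm (hD_le_one_of_homotopic_restrict_compl Circle.exp_pi_ne_one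
    (fpow_restrict_compl_homotopic_const n y _) (fpow_restrict_compl_homotopic_const n y _)) ?_
  rw [Order.one_le_iff_ne_zero, Ne, hD_eq_zero_iff]
  exact fpow_not_homotopic_const hn y
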